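/- Let m ≥ 1, n = 32m³ + 16m² + 6m + 1, and let X be the circulant graph X(Z_n; {±1, ±(4m+1), ±(16m²+4m+1)}) (the largest known circulant graph of degree 6 and diameter k = 3m, isomorphism class 1). Then for every l with 1 ≤ l ≤ 2m, the number of vertices of X at graph distance exactly l from the vertex 0 equals 6 if l = 1 and equals 4l² + 2 if l ≥ 2; i.e., every level l ≤ ⌊(2k+1)/3⌋ is maximal in the sense of the Abelian Cayley bound (LM_AC(6,l) = 4l² + 2 for l ≥ 2). -/

import Mathlib

/-
Write `A = 4m+1`, `B = 16m²+4m+1`, `n = 32m³+16m²+6m+1`, and send an integer vector `c`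
to the vertex `c₁ + c₂A + c₃B` of `Z_n`. The walks of length `k` from `0` reach exactly the images
of the vectors of `ℓ¹`-norm at most `k`, so level `l` is the image of the `ℓ¹`-sphere of
radius `l` as soon as the map is injective on the ball of radius `l`. On the ball of radius
`2m` it is: a nonzero vector of norm at most `4m` cannot map to `0 mod n`, by a size estimate
using `n = 2m·B + 2m·A + 2m + 1`. Finally the `ℓ¹`-sphere of radius `l ≥ 1` in `ℤ³` has
`4l² + 2` points.
-/

/-- The circulant graph `X(Z_n; {±g 0, …, ±g (f-1)})`: vertices are `ZMod n`, and distinct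
`u, v` are adjacent iff `v - u ≡ ±g i (mod n)` for some `i`. -/
def circulant (n : ℕ) {f : ℕ} (g : Fin f → ℤ) : SimpleGraph (ZMod n) where
  Adj u v := u ≠ v ∧ ∃ i, v - u = (g i : ZMod n) ∨ u - v = (g i : ZMod n)
  symm := by
    constructor
    rintro u v ⟨hne, i, h | h⟩
    · exact ⟨hne.symm, i, Or.inr h⟩
    · exact ⟨hne.symm, i, Or.inl h⟩
  loopless := by constructor; rintro u ⟨hne, -⟩; exact hne rfl

def l1Norm {d : ℕ} (c : Fin d → ℤ) : ℕ := ∑ i, (c i).natAbs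

section L1Norm

variable {d : ℕ}

theorem l1Norm_add_le (c c' : Fin d → ℤ) : l1Norm (c + c') ≤ l1Norm c + l1Norm c' := by
  rw [l1Norm, l1Norm, l1Norm, ← Finset.sum_add_distrib]
  exact Finset.sum_le_sum fun i _ => Int.natAbs_add_le _ _

theorem l1Norm_sub_le (c c' : Fin d → ℤ) : l1Norm (c - c') ≤ l1Norm c + l1Norm c' := by
  rw [l1Norm, l1Norm, l1Norm, ← Finset.sum_add_distrib]
  exact Finset.sum_le_sum fun i _ => Int.natAbs_sub_le _ _

theorem l1Norm_single (i : Fin d) (e : ℤ) : l1Norm (Pi.single i e) = e.natAbs := by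
  rw [l1Norm, Finset.sum_eq_single i (fun j _ hj => by simp [hj]) (by simp)]
  simp

theorem l1Norm_succ (c : Fin (d + 1) → ℤ) :
    l1Norm c = (c 0).natAbs + l1Norm (Fin.tail c) := by
  simp [l1Norm, Fin.sum_univ_succ, Fin.tail]

theorem natAbs_le_l1Norm (c : Fin d → ℤ) (i : Fin d) : (c i).natAbs ≤ l1Norm c :=
  Finset.single_le_sum (f := fun j => (c j).natAbs) (fun _ _ => Nat.zero_le _) (Finset.mem_univ i)

end L1Norm

noncomputable def l1Sphere (d t : ℕ) : Finset (Fin d → ℤ) :=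
  {c ∈ Fintype.piFinset fun _ => Finset.Icc (-(t : ℤ)) t | l1Norm c = t}

theorem mem_l1Sphere {d t : ℕ} {c : Fin d → ℤ} : c ∈ l1Sphere d t ↔ l1Norm c = t := by
  refine ⟨fun h => (Finset.mem_filter.1 h).2, fun h => Finset.mem_filter.2 ⟨?_, h⟩⟩
  refine Fintype.mem_piFinset.2 fun i => Finset.mem_Icc.2 ?_
  have := natAbs_le_l1Norm c i
  omega

theorem coe_l1Sphere (d t : ℕ) : (l1Sphere d t : Set (Fin d → ℤ)) = {c | l1Norm c = t} := by
  ext c; exact mem_l1Sphere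

theorem card_l1Sphere_succ (d t : ℕ) :
    (l1Sphere (d + 1) t).card =
      ∑ a ∈ Finset.Icc (-(t : ℤ)) t, (l1Sphere d (t - a.natAbs)).card := by
  rw [Finset.card_eq_sum_card_fiberwise (f := fun c => c 0) fun c hc => ?_]
  · refine Finset.sum_congr rfl fun a ha => ?_
    have ha' : a.natAbs ≤ t := by rw [Finset.mem_Icc] at ha; omega
    refine Finset.card_nbij' Fin.tail (Fin.cons (α := fun _ => ℤ) a) (fun c hc => ?_)
      (fun c hc => ?_) (fun c hc => ?_) (fun c _ => ?_)
    · simp only [Finset.coe_filter, mem_l1Sphere, Set.mem_ofPred_eq] at hc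
      rw [Finset.mem_coe, mem_l1Sphere]
      rw [l1Norm_succ, hc.2] at hc
      omega
    · rw [Finset.mem_coe, mem_l1Sphere] at hc
      simp only [Finset.coe_filter, mem_l1Sphere, Set.mem_ofPred_eq, l1Norm_succ, Fin.cons_zero,
        Fin.tail_cons, hc, and_true]
      omega
    · simp only [Finset.coe_filter, Set.mem_ofPred_eq] at hc
      rw [← hc.2, Fin.cons_self_tail]
    · exact Fin.tail_cons (α := fun _ => ℤ) a c
  · have := natAbs_le_l1Norm c 0
    rw [Finset.mem_coe, mem_l1Sphere] at hc
    simp only [Finset.coe_Icc, Set.mem_Icc]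
    omega

theorem sum_Icc_natAbs_add (F : ℕ → ℕ) (t : ℕ) :
    ∑ a ∈ Finset.Icc (-(t : ℤ)) t, F a.natAbs + F 0 =
      2 * ∑ j ∈ Finset.range (t + 1), F j := by
  induction t with
  | zero => simp [two_mul]
  | succ t ih =>
    have hIcc : Finset.Icc (-((t + 1 : ℕ) : ℤ)) (t + 1 : ℕ) =
        insert (-((t : ℤ) + 1)) (insert ((t : ℤ) + 1) (Finset.Icc (-(t : ℤ)) t)) := by
      ext x; simp only [Finset.mem_Icc, Finset.mem_insert]; omega
    rw [hIcc, Finset.sum_insert (by simp only [Finset.mem_insert, Finset.mem_Icc]; omega),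
      Finset.sum_insert (by simp),
      Finset.sum_range_succ, mul_add, ← ih]
    have h1 : (-((t : ℤ) + 1)).natAbs = t + 1 := by omega
    have h2 : ((t : ℤ) + 1).natAbs = t + 1 := by omega
    rw [h1, h2]; ring

theorem card_l1Sphere_succ_add (d t : ℕ) :
    (l1Sphere (d + 1) t).card + (l1Sphere d t).card =
      2 * ∑ j ∈ Finset.range (t + 1), (l1Sphere d j).card := by
  rw [card_l1Sphere_succ, ← Finset.sum_range_reflect]
  simpa using sum_Icc_natAbs_add (fun j => (l1Sphere d (t - j)).card) t

theorem card_l1Sphere_zero (t : ℕ) : (l1Sphere 0 t).card = if t = 0 then 1 else 0 := by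
  have hnorm (c : Fin 0 → ℤ) : l1Norm c = 0 := by simp [l1Norm]
  split_ifs with ht
  · subst ht
    exact Finset.card_eq_one.2 ⟨0, Finset.eq_singleton_iff_unique_mem.2
      ⟨mem_l1Sphere.2 (hnorm 0), fun c _ => Subsingleton.elim _ _⟩⟩
  · exact Finset.card_eq_zero.2 (Finset.eq_empty_of_forall_notMem fun c hc =>
      ht ((mem_l1Sphere.1 hc).symm.trans (hnorm c)))

theorem card_l1Sphere_one (t : ℕ) : (l1Sphere 1 t).card = if t = 0 then 1 else 2 := by
  have := card_l1Sphere_succ_add 0 t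
  simp only [Nat.reduceAdd, card_l1Sphere_zero, Finset.sum_ite_eq', Finset.mem_range,
    if_pos t.succ_pos] at this
  split_ifs at this ⊢ <;> omega

theorem card_l1Sphere_two (t : ℕ) : (l1Sphere 2 t).card = if t = 0 then 1 else 4 * t := by
  have hsum : ∑ j ∈ Finset.range (t + 1), (l1Sphere 1 j).card = 2 * t + 1 := by
    induction t with
    | zero => simp [card_l1Sphere_one]
    | succ t ih => rw [Finset.sum_range_succ, ih, card_l1Sphere_one, if_neg t.succ_ne_zero]; ring
  have := card_l1Sphere_succ_add 1 t
  rw [hsum, card_l1Sphere_one] at this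
  simp only [Nat.reduceAdd] at this
  split_ifs at this ⊢ <;> omega

theorem card_l1Sphere_three {t : ℕ} (ht : 0 < t) : (l1Sphere 3 t).card = 4 * t ^ 2 + 2 := by
  have hsum : ∑ j ∈ Finset.range (t + 1), (l1Sphere 2 j).card = 2 * t * (t + 1) + 1 := by
    clear ht
    induction t with
    | zero => simp [card_l1Sphere_two]
    | succ t ih => rw [Finset.sum_range_succ, ih, card_l1Sphere_two, if_neg t.succ_ne_zero]; ring
  have := card_l1Sphere_succ_add 2 t
  rw [hsum, card_l1Sphere_two, if_neg ht.ne'] at this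
  nlinarith

namespace circulant

variable {n f : ℕ} (g : Fin f → ℤ)

theorem adj_iff {u v : ZMod n} :
    (circulant n g).Adj u v ↔
      u ≠ v ∧ ∃ i, v - u = (g i : ZMod n) ∨ u - v = (g i : ZMod n) :=
  Iff.rfl

theorem exists_walk_length_le_one {y z : ZMod n} (i : Fin f)
    (h : z - y = g i ∨ y - z = g i) : ∃ p : (circulant n g).Walk y z, p.length ≤ 1 := by
  by_cases hyz : y = z
  · exact ⟨SimpleGraph.Walk.nil.copy rfl hyz, by simp⟩
  · exact ⟨((adj_iff g).2 ⟨hyz, i, h⟩).toWalk, by simp⟩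

theorem exists_walk_add_mul (x : ZMod n) (i : Fin f) (t : ℤ) :
    ∃ p : (circulant n g).Walk x (x + t * g i), p.length ≤ t.natAbs := by
  induction t using Int.induction_on with
  | zero => exact ⟨SimpleGraph.Walk.nil.copy rfl (by simp), by simp⟩
  | succ t ih =>
    obtain ⟨p, hp⟩ := ih
    obtain ⟨q, hq⟩ := exists_walk_length_le_one g i
      (y := x + ((t : ℤ) : ZMod n) * (g i : ZMod n))
      (z := x + ((t + 1 : ℤ) : ZMod n) * (g i : ZMod n)) (.inl (by push_cast; ring))
    exact ⟨p.append q, by simp only [SimpleGraph.Walk.length_append]; omega⟩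
  | pred t ih =>
    obtain ⟨p, hp⟩ := ih
    obtain ⟨q, hq⟩ := exists_walk_length_le_one g i
      (y := x + ((-t : ℤ) : ZMod n) * (g i : ZMod n))
      (z := x + ((-t - 1 : ℤ) : ZMod n) * (g i : ZMod n)) (.inr (by push_cast; ring))
    exact ⟨p.append q, by simp only [SimpleGraph.Walk.length_append]; omega⟩

theorem exists_dotProduct_of_walk {u v : ZMod n} (p : (circulant n g).Walk u v) :
    ∃ c : Fin f → ℤ, ((c ⬝ᵥ g : ℤ) : ZMod n) = v - u ∧ l1Norm c ≤ p.length := by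
  induction p with
  | nil => exact ⟨0, by simp, by simp [l1Norm]⟩
  | @cons u w v h p ih =>
    obtain ⟨c, hc, hlen⟩ := ih
    obtain ⟨-, i, hi⟩ := (adj_iff g).1 h
    obtain ⟨e, he, hwu⟩ : ∃ e : ℤ, e.natAbs = 1 ∧ w - u = ((e * g i : ℤ) : ZMod n) := by
      rcases hi with hi | hi
      · exact ⟨1, rfl, by simpa using hi⟩
      · exact ⟨-1, rfl, by push_cast; rw [← hi]; ring⟩
    refine ⟨c + Pi.single i e, ?_, ?_⟩
    · rw [add_dotProduct, single_dotProduct, Int.cast_add, hc, ← hwu]; ring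
    · have := l1Norm_add_le c (Pi.single i e)
      rw [l1Norm_single, he] at this
      simp only [SimpleGraph.Walk.length_cons]; omega

theorem exists_walk_zero_dotProduct (c : Fin f → ℤ) :
    ∃ p : (circulant n g).Walk 0 ((c ⬝ᵥ g : ℤ) : ZMod n), p.length ≤ l1Norm c := by
  suffices ∀ s : Finset (Fin f),
      ∃ p : (circulant n g).Walk 0 ((∑ i ∈ s, c i * g i : ℤ) : ZMod n),
        p.length ≤ ∑ i ∈ s, (c i).natAbs from this Finset.univ
  intro s
  induction s using Finset.induction_on with
  | empty =>
    exact ⟨SimpleGraph.Walk.nil.copy rfl (by simp), by simp only [SimpleGraph.Walk.length_copy,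
      SimpleGraph.Walk.length_nil, zero_le]⟩
  | insert i s hi ih =>
    obtain ⟨p, hp⟩ := ih
    obtain ⟨q, hq⟩ := exists_walk_add_mul g ((∑ i ∈ s, c i * g i : ℤ) : ZMod n) i (c i)
    refine ⟨(p.append q).copy rfl (by push_cast [Finset.sum_insert hi]; ring), ?_⟩
    rw [SimpleGraph.Walk.length_copy, SimpleGraph.Walk.length_append, Finset.sum_insert hi]
    omega

theorem injOn_dotProduct {R : ℕ}
    (hker : ∀ d : Fin f → ℤ, l1Norm d ≤ 2 * R → ((d ⬝ᵥ g : ℤ) : ZMod n) = 0 → d = 0) :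
    Set.InjOn (fun c : Fin f → ℤ => ((c ⬝ᵥ g : ℤ) : ZMod n)) {c | l1Norm c ≤ R} := by
  intro c hc c' hc' h
  have hnorm := l1Norm_sub_le c c'
  have hzero : (((c - c') ⬝ᵥ g : ℤ) : ZMod n) = 0 := by
    rw [sub_dotProduct, Int.cast_sub, sub_eq_zero]; exact h
  exact sub_eq_zero.1 (hker _ (by simp only [Set.mem_ofPred_eq] at hc hc'; omega) hzero)

theorem dist_zero_dotProduct {R : ℕ}
    (hinj : Set.InjOn (fun c : Fin f → ℤ => ((c ⬝ᵥ g : ℤ) : ZMod n)) {c | l1Norm c ≤ R})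
    {c : Fin f → ℤ} (hc : l1Norm c ≤ R) :
    (circulant n g).dist 0 (c ⬝ᵥ g : ℤ) = l1Norm c := by
  obtain ⟨p, hp⟩ := exists_walk_zero_dotProduct (n := n) g c
  -- A geodesic yields a vector of norm at most the distance with the same image; it must be `c`.
  obtain ⟨q, hq⟩ := p.reachable.exists_walk_length_eq_dist
  obtain ⟨c', hc', hlen⟩ := exists_dotProduct_of_walk g q
  have hdist := SimpleGraph.dist_le p
  have : c' = c := hinj (by simp only [Set.mem_ofPred_eq]; omega) hc
    (by rwa [sub_zero] at hc')
  subst this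
  omega

theorem ncard_setOf_dist_eq {R : ℕ}
    (hinj : Set.InjOn (fun c : Fin f → ℤ => ((c ⬝ᵥ g : ℤ) : ZMod n)) {c | l1Norm c ≤ R})
    {l : ℕ} (hl : 0 < l) (hlR : l ≤ R) :
    {v | (circulant n g).dist 0 v = l}.ncard = {c : Fin f → ℤ | l1Norm c = l}.ncard := by
  have hsphere : {v | (circulant n g).dist 0 v = l} =
      (fun c : Fin f → ℤ => ((c ⬝ᵥ g : ℤ) : ZMod n)) '' {c | l1Norm c = l} := by
    ext v
    constructor
    · intro hv
      simp only [Set.mem_ofPred_eq] at hv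
      obtain ⟨q, hq⟩ := SimpleGraph.exists_walk_of_dist_ne_zero (G := circulant n g)
        (u := 0) (v := v) (by omega)
      obtain ⟨c, hc, hlen⟩ := exists_dotProduct_of_walk g q
      rw [sub_zero] at hc
      have := dist_zero_dotProduct g hinj (c := c) (by omega)
      exact ⟨c, by simp only [Set.mem_ofPred_eq]; rw [← this, hc, hv], hc⟩
    · rintro ⟨c, hc, rfl⟩
      simp only [Set.mem_ofPred_eq] at hc ⊢
      rw [dist_zero_dotProduct g hinj (by omega), hc]
  rw [hsphere, (hinj.mono fun c hc => by
    simp only [Set.mem_ofPred_eq] at hc ⊢; omega).ncard_image]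

end circulant

theorem abs_add_mul_le {x y A : ℤ} (hA : 1 ≤ A) : |x + y * A| ≤ (|x| + |y|) * A := by
  calc |x + y * A| ≤ |x| + |y| * A := by
        rw [← abs_of_pos (by omega : 0 < A), ← abs_mul, abs_of_pos (by omega : 0 < A)]
        exact abs_add_le _ _
    _ ≤ (|x| + |y|) * A := by nlinarith [abs_nonneg x]

namespace LargestCirculantDegreeSix

theorem lt_abs_sub_mul (M t : ℤ) (hM : 0 ≤ M) :
    (4 * M - |t|) * (4 * M + 1) <
      |32 * M ^ 3 + 16 * M ^ 2 + 6 * M + 1 - t * (16 * M ^ 2 + 4 * M + 1)| := by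
  -- Only `t = 2M` and `t = 2M + 1` come close: there the difference is `2M(4M+1) + 2M + 1`,
  -- resp. `-(2M(4M+1) - 2M)`.
  rcases (by omega : t ≤ 2 * M - 1 ∨ t = 2 * M ∨ t = 2 * M + 1 ∨ 2 * M + 2 ≤ t) with
    h | rfl | rfl | h
  · have := le_abs_self (32 * M ^ 3 + 16 * M ^ 2 + 6 * M + 1 - t * (16 * M ^ 2 + 4 * M + 1))
    have := neg_abs_le t
    nlinarith [mul_le_mul_of_nonneg_right h (by positivity : (0 : ℤ) ≤ 16 * M ^ 2)]
  · rw [abs_of_nonneg (by omega : 0 ≤ 2 * M)]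
    have := le_abs_self (32 * M ^ 3 + 16 * M ^ 2 + 6 * M + 1 - 2 * M * (16 * M ^ 2 + 4 * M + 1))
    nlinarith
  · rw [abs_of_nonneg (by omega : 0 ≤ 2 * M + 1)]
    have := neg_abs_le
      (32 * M ^ 3 + 16 * M ^ 2 + 6 * M + 1 - (2 * M + 1) * (16 * M ^ 2 + 4 * M + 1))
    nlinarith
  · rw [abs_of_nonneg (by omega : 0 ≤ t)]
    have := neg_abs_le (32 * M ^ 3 + 16 * M ^ 2 + 6 * M + 1 - t * (16 * M ^ 2 + 4 * M + 1))
    nlinarith [mul_le_mul_of_nonneg_right h (by positivity : (0 : ℤ) ≤ 16 * M ^ 2 + 8 * M + 2)]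

theorem eq_zero_of_dvd {M d₁ d₂ d₃ : ℤ} (hM : 0 ≤ M)
    (hd : |d₁| + |d₂| + |d₃| ≤ 4 * M)
    (hdvd : 32 * M ^ 3 + 16 * M ^ 2 + 6 * M + 1 ∣
      d₁ + d₂ * (4 * M + 1) + d₃ * (16 * M ^ 2 + 4 * M + 1)) :
    d₁ = 0 ∧ d₂ = 0 ∧ d₃ = 0 := by
  obtain ⟨q, hq⟩ := hdvd
  have hr := abs_add_mul_le (x := d₁) (y := d₂) (A := 4 * M + 1) (by omega)
  have hs : |d₁ + d₂ * (4 * M + 1) + d₃ * (16 * M ^ 2 + 4 * M + 1)| ≤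
      4 * M * (16 * M ^ 2 + 4 * M + 1) := by
    have := abs_add_le (d₁ + d₂ * (4 * M + 1)) (d₃ * (16 * M ^ 2 + 4 * M + 1))
    rw [abs_mul, abs_of_pos (by positivity : 0 < 16 * M ^ 2 + 4 * M + 1)] at this
    nlinarith [abs_nonneg d₁, abs_nonneg d₂, abs_nonneg d₃]
  have hq1 : |q| ≤ 1 := by
    by_contra! hq2
    rw [hq, abs_mul, abs_of_pos (by positivity : 0 < 32 * M ^ 3 + 16 * M ^ 2 + 6 * M + 1)] at hs
    nlinarith [mul_le_mul_of_nonneg_left (show 2 ≤ |q| by omega)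
      (by positivity : 0 ≤ 32 * M ^ 3 + 16 * M ^ 2 + 6 * M + 1)]
  rcases (by rw [abs_le] at hq1; omega : q = -1 ∨ q = 0 ∨ q = 1) with rfl | rfl | rfl
  · refine absurd (lt_abs_sub_mul M (-d₃) hM) (not_lt.2 ?_)
    rw [abs_neg, show 32 * M ^ 3 + 16 * M ^ 2 + 6 * M + 1 - -d₃ * (16 * M ^ 2 + 4 * M + 1) =
      -(d₁ + d₂ * (4 * M + 1)) by linarith, abs_neg]
    nlinarith
  · have h₁₂ : d₁ + d₂ * (4 * M + 1) = 0 := by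
      refine Int.eq_zero_of_abs_lt_dvd (m := 16 * M ^ 2 + 4 * M + 1) ⟨-d₃, by linarith⟩ ?_
      nlinarith [abs_nonneg d₁, abs_nonneg d₂, abs_nonneg d₃]
    have h₃ : d₃ = 0 := by
      have : d₃ * (16 * M ^ 2 + 4 * M + 1) = 0 := by linarith
      exact (mul_eq_zero.1 this).resolve_right (by positivity)
    have h₁ : d₁ = 0 := Int.eq_zero_of_abs_lt_dvd (m := 4 * M + 1) ⟨-d₂, by linarith⟩
      (by linarith [abs_nonneg d₂, abs_nonneg d₃])
    subst h₁
    have h₂ : d₂ = 0 :=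
      (mul_eq_zero.1 (by linarith : d₂ * (4 * M + 1) = 0)).resolve_right (by omega)
    exact ⟨rfl, h₂, h₃⟩
  · refine absurd (lt_abs_sub_mul M d₃ hM) (not_lt.2 ?_)
    rw [show 32 * M ^ 3 + 16 * M ^ 2 + 6 * M + 1 - d₃ * (16 * M ^ 2 + 4 * M + 1) =
      d₁ + d₂ * (4 * M + 1) by linarith]
    nlinarith

theorem eq_zero_of_l1Norm_le (m : ℕ) {d : Fin 3 → ℤ} (hd : l1Norm d ≤ 2 * (2 * m))
    (h : ((d ⬝ᵥ ![1, 4 * (m : ℤ) + 1, 16 * (m : ℤ) ^ 2 + 4 * m + 1] : ℤ) :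
      ZMod (32 * m ^ 3 + 16 * m ^ 2 + 6 * m + 1)) = 0) :
    d = 0 := by
  rw [ZMod.intCast_zmod_eq_zero_iff_dvd] at h
  simp only [dotProduct, Fin.sum_univ_three] at h
  simp only [l1Norm, Fin.sum_univ_three] at hd
  zify at hd
  obtain ⟨h₀, h₁, h₂⟩ := eq_zero_of_dvd (M := m) (d₁ := d 0) (d₂ := d 1) (d₃ := d 2)
    (by positivity) (by linarith) (by push_cast at h; simpa using h)
  ext i
  fin_cases i <;> assumption

end LargestCirculantDegreeSix

theorem stmt2_general (m : ℕ) (l : ℕ) (hl1 : 1 ≤ l) (hl2 : l ≤ 2*m) :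
    let n : ℕ := 32*m^3+16*m^2+6*m+1
    let X := circulant n ![(1 : ℤ), 4*(m : ℤ)+1, 16*(m : ℤ)^2+4*m+1]
    (l = 1 → {v : ZMod n | X.dist 0 v = l}.ncard = 6) ∧
    (2 ≤ l → {v : ZMod n | X.dist 0 v = l}.ncard = 4*l^2+2) := by
  intro n X
  have hinj := circulant.injOn_dotProduct (n := n) _ fun d hd =>
    LargestCirculantDegreeSix.eq_zero_of_l1Norm_le m hd
  have hcount : {v : ZMod n | X.dist 0 v = l}.ncard = 4 * l ^ 2 + 2 := by
    rw [circulant.ncard_setOf_dist_eq _ hinj hl1 hl2, ← coe_l1Sphere, Set.ncard_coe_finset,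
      card_l1Sphere_three hl1]
  exact ⟨fun h => by subst h; simpa using hcount, fun _ => hcount⟩

/-- For the largest known circulant graph of degree 6 and diameter `k = 3m` (isomorphism
class 1; order `n = 32m³+16m²+6m+1`, generators `1`, `4m+1`, `16m²+4m+1`), every
distance partition level `l` with `1 ≤ l ≤ 2m = ⌊(2k+1)/3⌋` is maximal: it has `6`
vertices if `l = 1` and `4l²+2 = LM_AC(6, l)` vertices if `l ≥ 2`. -/
theorem stmt2 (m : ℕ) (hm : 1 ≤ m) (l : ℕ) (hl1 : 1 ≤ l) (hl2 : l ≤ 2*m) :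
    let n : ℕ := 32*m^3+16*m^2+6*m+1
    let X := circulant n ![(1 : ℤ), 4*(m : ℤ)+1, 16*(m : ℤ)^2+4*m+1]
    (l = 1 → {v : ZMod n | X.dist 0 v = l}.ncard = 6) ∧
    (2 ≤ l → {v : ZMod n | X.dist 0 v = l}.ncard = 4*l^2+2) :=
  stmt2_general m l hl1 hl2
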